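/- For the autonomous Lagrangian L_a(x,y,ẋ,ẏ) = (1/2)ẋ² + 1 − cos(2πx) + (1/2)(ẏ−c)² on 𝕋² = ℝ²/ℤ², let u ∈ C(𝕋²,ℝ) satisfy min_{q ∈ {0}×𝕊¹} u(q) = min_{𝕋²} u. Then for every ỹ ∈ ℝ and every t > 0 one has min_{𝕋²} u ≤ T_t u(π(0,ỹ)) ≤ (min_{𝕋²} u) + 1/(2t); in particular T_t u(π(0,ỹ)) → min_{𝕋²} u as t → +∞. -/

import Mathlib

/-!
The action is nonnegative, so `T_t u ≥ min u`. Conversely, let `(0, y₀)` be a minimum point of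
`u` on `{0} × 𝕊¹`, where the potential `1 − cos(2πx)` vanishes. Moving vertically from it with
speed `c + ε / t`, where `ε ≡ ỹ − y₀ − ct (mod 1)` and `|ε| ≤ 1/2`, reaches `π(0, ỹ)` at time `t`
with action `ε² / (2t) ≤ 1 / (2t)`.
-/

open Set Filter MeasureTheory

noncomputable section

/-- The two-torus `𝕋² = ℝ²/ℤ²`. -/
abbrev T2 : Type := AddCircle (1 : ℝ) × AddCircle (1 : ℝ)

/-- The quotient map `π : ℝ² → 𝕋²`. -/
def p2 (q : ℝ × ℝ) : T2 := ((q.1 : AddCircle (1 : ℝ)), (q.2 : AddCircle (1 : ℝ)))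

/-- `γ` is continuous and piecewise `C¹` on `[a,b]`. -/
def PiecewiseC1On {E : Type*} [NormedAddCommGroup E] [NormedSpace ℝ E]
    (γ : ℝ → E) (a b : ℝ) : Prop :=
  ContinuousOn γ (Set.Icc a b) ∧
  ∃ (N : ℕ) (p : Fin (N + 1) → ℝ), p 0 = a ∧ p (Fin.last N) = b ∧ Monotone p ∧
    ∀ i : Fin N, ContDiffOn ℝ 1 γ (Set.Icc (p i.castSucc) (p i.succ))

/-- The Lagrangian `L_a(x,y,ẋ,ẏ) = ẋ²/2 + 1 − cos(2πx) + (ẏ−c)²/2`. -/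
def La (c : ℝ) (q v : ℝ × ℝ) : ℝ :=
  (1 / 2) * v.1 ^ 2 + 1 - Real.cos (2 * Real.pi * q.1) + (1 / 2) * (v.2 - c) ^ 2

/-- The action of a curve for `L_a` on `[a,b]`. -/
def actionA (c : ℝ) (γ : ℝ → ℝ × ℝ) (a b : ℝ) : ℝ :=
  ∫ s in a..b, La c (γ s) (deriv γ s)

/-- The Lax–Oleinik semigroup `T_t u (q)` for `L_a`. -/
def Tlo (c t : ℝ) (u : T2 → ℝ) (q : T2) : ℝ :=
  sInf {A : ℝ | ∃ γ : ℝ → ℝ × ℝ, PiecewiseC1On γ 0 t ∧ p2 (γ t) = q ∧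
    A = u (p2 (γ 0)) + actionA c γ 0 t}

/-- `F_t(q,q')`: minimal action among curves from `q` to `q'` in time `t`. -/
def Fa (c t : ℝ) (q q' : T2) : ℝ :=
  sInf {A : ℝ | ∃ γ : ℝ → ℝ × ℝ, PiecewiseC1On γ 0 t ∧ p2 (γ 0) = q ∧
    p2 (γ t) = q' ∧ A = actionA c γ 0 t}

/-- The Peierls barrier `h(q,q') = liminf_{t→+∞} F_t(q,q')`, written as
`sup over T of inf over t ≥ T`. -/
def hA (c : ℝ) (q q' : T2) : ℝ :=
  sSup {r : ℝ | ∃ T : ℝ, r = sInf {A : ℝ | ∃ t : ℝ, 0 < t ∧ T ≤ t ∧ A = Fa c t q q'}}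

/-- The circle `{0} × 𝕊¹ ⊆ 𝕋²`. -/
def circ0 : Set T2 := {q : T2 | ∃ yt : ℝ, q = p2 (0, yt)}

/-- The function `u_δ(π(x̃,ỹ)) = max(δ − dist(ỹ − 1/2, ℤ), 0)`. -/
def udelta (δ : ℝ) (q : T2) : ℝ :=
  max (δ - ‖q.2 - ((1 / 2 : ℝ) : AddCircle (1 : ℝ))‖) 0

lemma La_nonneg (c : ℝ) (q v : ℝ × ℝ) : 0 ≤ La c q v := by
  have := Real.cos_le_one (2 * Real.pi * q.1)
  unfold La
  nlinarith [sq_nonneg v.1, sq_nonneg (v.2 - c)]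

lemma actionA_nonneg (c : ℝ) (γ : ℝ → ℝ × ℝ) {t : ℝ} (ht : 0 ≤ t) : 0 ≤ actionA c γ 0 t :=
  intervalIntegral.integral_nonneg ht fun _ _ => La_nonneg c _ _

lemma ContDiff.piecewiseC1On {E : Type*} [NormedAddCommGroup E] [NormedSpace ℝ E] {γ : ℝ → E}
    (hγ : ContDiff ℝ 1 γ) {a b : ℝ} (hab : a ≤ b) : PiecewiseC1On γ a b :=
  ⟨hγ.continuous.continuousOn, 1, ![a, b], rfl, rfl, Fin.monotone_iff_le_succ.2 fun i => by
    fin_cases i; exact hab, fun _ => hγ.contDiffOn⟩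

lemma p2_surjective : Function.Surjective p2 := by
  rintro ⟨x, y⟩
  obtain ⟨x, rfl⟩ := QuotientAddGroup.mk_surjective x
  obtain ⟨y, rfl⟩ := QuotientAddGroup.mk_surjective y
  exact ⟨(x, y), rfl⟩

lemma circ0_eq : circ0 = {0} ×ˢ univ := by
  ext ⟨x, y⟩
  obtain ⟨y, rfl⟩ := QuotientAddGroup.mk_surjective y
  simp [circ0, p2]

lemma isCompact_circ0 : IsCompact circ0 := by
  rw [circ0_eq]
  exact isCompact_singleton.prod isCompact_univ

lemma exists_p2_zero_eq_sInf_image_circ0 {u : T2 → ℝ} (hu : Continuous u) :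
    ∃ y : ℝ, u (p2 (0, y)) = sInf (u '' circ0) := by
  obtain ⟨_, ⟨y, rfl⟩, hy⟩ := (isCompact_circ0.image hu).sInf_mem
    (Set.Nonempty.image u ⟨_, 0, rfl⟩)
  exact ⟨y, hy⟩

lemma le_Tlo {c t m : ℝ} {u : T2 → ℝ} (hm : ∀ q, m ≤ u q) (ht : 0 ≤ t) (q : T2) :
    m ≤ Tlo c t u q := by
  obtain ⟨x, rfl⟩ := p2_surjective q
  refine le_csInf ⟨_, fun _ => x, contDiff_const.piecewiseC1On ht, rfl, rfl⟩ ?_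
  rintro _ ⟨γ, -, -, rfl⟩
  linarith [hm (p2 (γ 0)), actionA_nonneg c γ ht]

lemma Tlo_le {c t : ℝ} {u : T2 → ℝ} (hu : BddBelow (range u)) (ht : 0 ≤ t) {γ : ℝ → ℝ × ℝ}
    (hγ : PiecewiseC1On γ 0 t) : Tlo c t u (p2 (γ t)) ≤ u (p2 (γ 0)) + actionA c γ 0 t := by
  obtain ⟨m, hm⟩ := hu
  refine csInf_le ⟨m, ?_⟩ ⟨γ, hγ, rfl, rfl⟩
  rintro _ ⟨γ, -, -, rfl⟩
  linarith [hm (mem_range_self (p2 (γ 0))), actionA_nonneg c γ ht]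

lemma actionA_vertical (c y m t : ℝ) :
    actionA c (fun s => ((0 : ℝ), y + s * m)) 0 t = t * ((m - c) ^ 2 / 2) := by
  have hderiv (s : ℝ) : deriv (fun s => ((0 : ℝ), y + s * m)) s = (0, m) :=
    ((hasDerivAt_const s 0).prodMk ((hasDerivAt_mul_const m).const_add y)).deriv
  simp [actionA, La, hderiv]
  ring

lemma exists_abs_le_half_coe_eq (x : ℝ) :
    ∃ ε : ℝ, |ε| ≤ 1 / 2 ∧ (ε : AddCircle (1 : ℝ)) = x := by
  refine ⟨x - round x, abs_sub_round x, ?_⟩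
  rw [AddCircle.coe_sub, sub_eq_self, AddCircle.coe_eq_zero_iff]
  exact ⟨round x, by simp⟩

lemma Tlo_p2_zero_le {c t : ℝ} {u : T2 → ℝ} (hu : BddBelow (range u)) (ht : 0 < t) (y₀ y : ℝ) :
    Tlo c t u (p2 (0, y)) ≤ u (p2 (0, y₀)) + 1 / (2 * t) := by
  obtain ⟨ε, hε, hεy⟩ := exists_abs_le_half_coe_eq (y - y₀ - c * t)
  set γ : ℝ → ℝ × ℝ := fun s => (0, y₀ + s * (c + ε / t))
  have hγt : p2 (γ t) = p2 (0, y) := by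
    have : y₀ + t * (c + ε / t) = y + (ε - (y - y₀ - c * t)) := by field_simp; ring
    simp [γ, p2, this, hεy]
  have hγ0 : p2 (γ 0) = p2 (0, y₀) := by simp [γ]
  have hact : actionA c γ 0 t ≤ 1 / (2 * t) := calc
    actionA c γ 0 t = ε ^ 2 / (2 * t) := by rw [actionA_vertical]; field_simp; ring
    _ ≤ 1 / (2 * t) := by gcongr; nlinarith [sq_abs ε, abs_nonneg ε]
  calc Tlo c t u (p2 (0, y)) = Tlo c t u (p2 (γ t)) := by rw [hγt]
    _ ≤ u (p2 (γ 0)) + actionA c γ 0 t :=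
      Tlo_le hu ht.le (ContDiff.piecewiseC1On (by fun_prop) ht.le)
    _ ≤ u (p2 (0, y₀)) + 1 / (2 * t) := by rw [hγ0]; gcongr

/-- For `L_a` on `𝕋²` and continuous `u` with
`min_{{0}×𝕊¹} u = min_{𝕋²} u`, for every `ỹ` and `t > 0` one has
`min_{𝕋²} u ≤ T_t u (π(0,ỹ)) ≤ min_{𝕋²} u + 1/(2t)`; in particular
`T_t u (π(0,ỹ)) → min_{𝕋²} u` as `t → +∞`. -/
theorem laxOleinik_two_sided_bound_and_limit (c : ℝ) (u : T2 → ℝ)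
    (hu : Continuous u) (hmin : sInf (u '' circ0) = sInf (Set.range u)) :
    (∀ yt : ℝ, ∀ t : ℝ, 0 < t →
      sInf (Set.range u) ≤ Tlo c t u (p2 (0, yt)) ∧
      Tlo c t u (p2 (0, yt)) ≤ sInf (Set.range u) + 1 / (2 * t)) ∧
    (∀ yt : ℝ, Filter.Tendsto (fun t : ℝ => Tlo c t u (p2 (0, yt)))
      Filter.atTop (nhds (sInf (Set.range u)))) := by
  have hbdd : BddBelow (range u) := (isCompact_range hu).bddBelow
  obtain ⟨y₀, hy₀⟩ := exists_p2_zero_eq_sInf_image_circ0 hu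
  rw [hmin] at hy₀
  have hbound (yt t : ℝ) (ht : 0 < t) :
      sInf (range u) ≤ Tlo c t u (p2 (0, yt)) ∧
        Tlo c t u (p2 (0, yt)) ≤ sInf (range u) + 1 / (2 * t) :=
    ⟨le_Tlo (fun q => csInf_le hbdd (mem_range_self q)) ht.le _,
      hy₀ ▸ Tlo_p2_zero_le hbdd ht y₀ yt⟩
  refine ⟨hbound, fun yt => ?_⟩
  have hlim : Tendsto (fun t : ℝ => sInf (range u) + 1 / (2 * t)) atTop
      (nhds (sInf (range u) + 0)) :=
    tendsto_const_nhds.add (tendsto_const_nhds.div_atTop (tendsto_id.const_mul_atTop two_pos))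
  rw [add_zero] at hlim
  exact tendsto_of_tendsto_of_tendsto_of_le_of_le' tendsto_const_nhds hlim
    ((eventually_gt_atTop 0).mono fun t ht => (hbound yt t ht).1)
    ((eventually_gt_atTop 0).mono fun t ht => (hbound yt t ht).2)
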